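/- arXiv:1206.0156 — 3 statements merged into one kernel-verified Lean document; each statement's English description precedes it below -/
import Mathlib

section
/- For every positive integer N and every a ∈ A_N (a ≤ N coprime to r_1,...,r_m), one has a ≤ N·2^{-(|B_N(a)|^{1/m} - 1)}. -/
/-!
If `b = a * ∏ rᵢ ^ dᵢ ≤ N` with every `rᵢ ≥ 2`, then `a * 2 ^ dᵢ ≤ N`, so every exponent is at most
`L = log₂ ⌊N / a⌋`. Hence `|B_N(a)| ≤ (L + 1) ^ m`, i.e. `|B_N(a)| ^ (1/m) - 1 ≤ L`, and
`a * 2 ^ L ≤ N` gives the claim.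
-/

open Finset

lemma Nat.le_log_div_of_mul_prod_pow_le {ι : Type*} [Fintype ι] {r : ι → ℕ} (hr : ∀ i, 2 ≤ r i)
    {a N : ℕ} (ha : 0 < a) {d : ι → ℕ} (h : a * ∏ i, r i ^ d i ≤ N) (i : ι) :
    d i ≤ Nat.log 2 (N / a) := by
  have hpow : 2 ^ d i ≤ ∏ j, r j ^ d j :=
    calc 2 ^ d i ≤ r i ^ d i := Nat.pow_le_pow_left (hr i) _
      _ ≤ ∏ j, r j ^ d j :=
        single_le_prod' (fun j _ => Nat.one_le_pow _ _ (by linarith [hr j])) (mem_univ i)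
  refine Nat.le_log_of_pow_le one_lt_two ((Nat.le_div_iff_mul_le ha).2 ?_)
  calc 2 ^ d i * a = a * 2 ^ d i := mul_comm _ _
    _ ≤ a * ∏ j, r j ^ d j := Nat.mul_le_mul_left a hpow
    _ ≤ N := h

lemma Set.ncard_mul_prod_pow_le_le {ι : Type*} [Fintype ι] {r : ι → ℕ} (hr : ∀ i, 2 ≤ r i)
    {a : ℕ} (ha : 0 < a) (N : ℕ) :
    {b : ℕ | b ≤ N ∧ ∃ d : ι → ℕ, b = a * ∏ i, r i ^ d i}.ncard
      ≤ (Nat.log 2 (N / a) + 1) ^ Fintype.card ι := by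
  classical
  set D := Fintype.piFinset fun _ : ι => Finset.range (Nat.log 2 (N / a) + 1)
  have hsub : {b : ℕ | b ≤ N ∧ ∃ d : ι → ℕ, b = a * ∏ i, r i ^ d i}
      ⊆ (D.image fun d => a * ∏ i, r i ^ d i : Finset ℕ) := by
    rintro b ⟨hbN, d, rfl⟩
    refine Finset.mem_coe.2 (Finset.mem_image.2 ⟨d, Fintype.mem_piFinset.2 fun i => ?_, rfl⟩)
    exact Finset.mem_range.2 (Nat.lt_succ_of_le (Nat.le_log_div_of_mul_prod_pow_le hr ha hbN i))
  calc _ ≤ (D.image fun d => a * ∏ i, r i ^ d i).card :=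
        (Set.ncard_le_ncard hsub (finite_toSet _)).trans_eq (Set.ncard_coe_finset _)
    _ ≤ D.card := card_image_le
    _ = _ := by simp [D]

lemma Nat.mul_pow_log_div_le (b : ℕ) {a N : ℕ} (ha : 0 < a) (haN : a ≤ N) :
    a * b ^ Nat.log b (N / a) ≤ N :=
  calc a * b ^ Nat.log b (N / a) ≤ a * (N / a) :=
        Nat.mul_le_mul_left a (Nat.pow_log_le_self b (Nat.div_pos haN ha).ne')
    _ ≤ N := Nat.mul_div_le N a

lemma Real.rpow_one_div_le_of_le_pow {x y : ℝ} (hx : 0 ≤ x) (hy : 0 ≤ y) {m : ℕ} (hm : 0 < m)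
    (h : x ≤ y ^ m) : x ^ (1 / m : ℝ) ≤ y := by
  rw [one_div, Real.rpow_inv_le_iff_of_pos hx hy (Nat.cast_pos.2 hm), Real.rpow_natCast]
  exact h

theorem stmt3_general (m : ℕ) (hm : 0 < m) (r : Fin m → ℕ) (hrprime : ∀ i, (r i).Prime)
    (a N : ℕ) (ha : 0 < a) (haN : a ≤ N) :
    (a : ℝ) ≤ (N : ℝ) *
      (2 : ℝ) ^ (-(((({b : ℕ | b ≤ N ∧ ∃ d : Fin m → ℕ, b = a * ∏ i, r i ^ d i} : Set ℕ).ncard : ℝ)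
        ^ ((1 : ℝ) / m) - 1))) := by
  set K := ({b : ℕ | b ≤ N ∧ ∃ d : Fin m → ℕ, b = a * ∏ i, r i ^ d i} : Set ℕ).ncard
  set L := Nat.log 2 (N / a)
  have hK : (K : ℝ) ≤ ((L : ℝ) + 1) ^ m := by
    have := Set.ncard_mul_prod_pow_le_le (fun i => (hrprime i).two_le) ha N
    rw [Fintype.card_fin] at this
    exact_mod_cast this
  have hroot : (K : ℝ) ^ (1 / m : ℝ) ≤ L + 1 :=
    Real.rpow_one_div_le_of_le_pow K.cast_nonneg (by positivity) hm hK
  rw [Real.rpow_neg zero_le_two, ← div_eq_mul_inv, le_div_iff₀ (by positivity)]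
  calc (a : ℝ) * 2 ^ ((K : ℝ) ^ (1 / m : ℝ) - 1) ≤ a * 2 ^ (L : ℝ) := by
        gcongr
        · exact one_le_two
        · linarith
    _ = a * 2 ^ L := by rw [Real.rpow_natCast]
    _ ≤ N := by exact_mod_cast Nat.mul_pow_log_div_le 2 ha haN

/-- For `a ∈ A_N` (i.e. `a ≤ N` coprime to all the `r i`),
`a ≤ N * 2^{-(|B_N(a)|^{1/m} - 1)}`. -/
theorem stmt3 (m : ℕ) (hm : 0 < m) (r : Fin m → ℕ) (hrprime : ∀ i, (r i).Prime)
    (hrinj : Function.Injective r)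
    (a N : ℕ) (ha : 0 < a) (haN : a ≤ N) (hcop : ∀ i, Nat.Coprime a (r i)) :
    (a : ℝ) ≤ (N : ℝ) *
      (2 : ℝ) ^ (-(((({b : ℕ | b ≤ N ∧ ∃ d : Fin m → ℕ, b = a * ∏ i, r i ^ d i} : Set ℕ).ncard : ℝ)
        ^ ((1 : ℝ) / m) - 1))) :=
  stmt3_general m hm r hrprime a N ha haN
end

section
/- For all a ≤ b ≤ c integers and any n ≥ 1, the density of A^{(l)} is controlled: |A_N^{(l)}| ≤ N·2^{-(l^{1/m} - 1)}, where A_N^{(l)} = { a ∈ A_N : |B_N(a)| = l }. -/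
/-!
Fix `a` with `|B_N(a)| = l` and any `u` with `u ^ m < l`. If `N < a * 2 ^ u`, every
`a * ∏ r_i ^ d_i ≤ N` has all exponents `d_i < u` (each `r_i ≥ 2`), so `B_N(a)` is the image of a
subset of `{0, …, u - 1} ^ m` and has at most `u ^ m < l` elements. Hence `a * 2 ^ u ≤ N`, and
taking `u = ⌈l ^ (1/m)⌉ - 1 ≥ l ^ (1/m) - 1` puts every such `a` in `[1, N * 2 ^ (-(l ^ (1/m) - 1))]`.
-/

open Finset

/-- The set `B_N(a)`. -/
def multiplesByPowers {m : ℕ} (r : Fin m → ℕ) (N a : ℕ) : Set ℕ :=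
  {b | b ≤ N ∧ ∃ d : Fin m → ℕ, b = a * ∏ i, r i ^ d i}

section multiplesByPowers

variable {m : ℕ} {r : Fin m → ℕ}

theorem two_pow_le_prod_pow (hr : ∀ i, 2 ≤ r i) (d : Fin m → ℕ) (i : Fin m) :
    2 ^ d i ≤ ∏ j, r j ^ d j :=
  calc 2 ^ d i ≤ r i ^ d i := Nat.pow_le_pow_left (hr i) _
    _ ≤ ∏ j, r j ^ d j :=
      single_le_prod' (fun j _ => Nat.one_le_pow _ _ (by linarith [hr j])) (mem_univ i)

theorem ncard_multiplesByPowers_le (hr : ∀ i, 2 ≤ r i) {N a u : ℕ} (hN : N < a * 2 ^ u) :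
    (multiplesByPowers r N a).ncard ≤ u ^ m := by
  have hsub : multiplesByPowers r N a ⊆
      (Fintype.piFinset fun _ : Fin m => range u).image fun d => a * ∏ i, r i ^ d i := by
    rintro b ⟨hbN, d, rfl⟩
    refine mem_coe.2 (mem_image.2 ⟨d, Fintype.mem_piFinset.2 fun i => mem_range.2 ?_, rfl⟩)
    by_contra! hdi
    have : a * 2 ^ u ≤ a * ∏ j, r j ^ d j :=
      Nat.mul_le_mul_left a <| (Nat.pow_le_pow_right two_pos hdi).trans (two_pow_le_prod_pow hr d i)
    omega
  calc (multiplesByPowers r N a).ncard ≤ _ := Set.ncard_le_ncard hsub (finite_toSet _)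
    _ = _ := Set.ncard_coe_finset _
    _ ≤ (Fintype.piFinset fun _ : Fin m => range u).card := card_image_le
    _ = u ^ m := by simp

theorem mul_two_pow_le_of_pow_lt_ncard (hr : ∀ i, 2 ≤ r i) {N a u : ℕ}
    (hu : u ^ m < (multiplesByPowers r N a).ncard) : a * 2 ^ u ≤ N := by
  by_contra! hN
  exact (ncard_multiplesByPowers_le hr hN).not_gt hu

end multiplesByPowers

theorem exists_pow_lt_and_rpow_one_div_sub_one_le {m l : ℕ} (hm : m ≠ 0) (hl : 1 ≤ l) :
    ∃ u : ℕ, u ^ m < l ∧ (l : ℝ) ^ ((1 : ℝ) / m) - 1 ≤ u := by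
  set x : ℝ := (l : ℝ) ^ ((1 : ℝ) / m)
  have hx : 1 ≤ x := Real.one_le_rpow (by exact_mod_cast hl) (by positivity)
  have hceil : (⌈x⌉₊ - 1 : ℕ) = (⌈x⌉₊ : ℝ) - 1 := by
    rw [Nat.cast_sub (Nat.one_le_ceil_iff.2 (by linarith)), Nat.cast_one]
  refine ⟨⌈x⌉₊ - 1, ?_, by rw [hceil]; linarith [Nat.le_ceil x]⟩
  have hlt : ((⌈x⌉₊ - 1 : ℕ) : ℝ) < x := by
    rw [hceil]; linarith [Nat.ceil_lt_add_one (by linarith : (0 : ℝ) ≤ x)]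
  have hxm : x ^ m = l := by
    simp only [x, one_div]
    exact Real.rpow_inv_natCast_pow (Nat.cast_nonneg l) hm
  exact_mod_cast hxm ▸ pow_lt_pow_left₀ hlt (Nat.cast_nonneg _) hm

theorem le_mul_two_rpow_neg_of_mul_two_pow_le {N a u : ℕ} {y : ℝ} (hau : a * 2 ^ u ≤ N)
    (hy : y ≤ u) : (a : ℝ) ≤ N * 2 ^ (-y) := by
  rw [Real.rpow_neg zero_le_two, ← div_eq_mul_inv, le_div_iff₀ (by positivity)]
  calc (a : ℝ) * 2 ^ y ≤ a * 2 ^ (u : ℝ) := by gcongr; norm_num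
    _ ≤ N := by rw [Real.rpow_natCast]; exact_mod_cast hau

theorem ncard_le_of_subset_Icc_one {s : Set ℕ} {C : ℝ} (hC : 0 ≤ C)
    (hs : ∀ a ∈ s, 1 ≤ a ∧ (a : ℝ) ≤ C) : (s.ncard : ℝ) ≤ C := by
  have hsub : s ⊆ Set.Icc 1 ⌊C⌋₊ := fun a ha => ⟨(hs a ha).1, Nat.le_floor (hs a ha).2⟩
  have hcard : s.ncard ≤ ⌊C⌋₊ := by
    simpa using Set.ncard_le_ncard hsub (Set.finite_Icc _ _)
  exact (Nat.cast_le.2 hcard).trans (Nat.floor_le hC)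

theorem stmt7_general (m : ℕ) (hm : 0 < m) (r : Fin m → ℕ) (hrprime : ∀ i, (r i).Prime)
    (N l : ℕ) (hl : 1 ≤ l) :
    ((({a : ℕ | 1 ≤ a ∧ a ≤ N ∧ (∀ i, Nat.Coprime a (r i)) ∧
        ({b : ℕ | b ≤ N ∧ ∃ d : Fin m → ℕ, b = a * ∏ i, r i ^ d i} : Set ℕ).ncard = l} :
          Set ℕ).ncard : ℝ))
      ≤ (N : ℝ) * (2 : ℝ) ^ (-(((l : ℝ) ^ ((1 : ℝ) / m)) - 1)) := by
  obtain ⟨u, hul, hu⟩ := exists_pow_lt_and_rpow_one_div_sub_one_le hm.ne' hl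
  refine ncard_le_of_subset_Icc_one (by positivity) ?_
  rintro a ⟨ha, -, -, hB⟩
  have hau : a * 2 ^ u ≤ N :=
    mul_two_pow_le_of_pow_lt_ncard (r := r) (fun i => (hrprime i).two_le) (hB ▸ hul)
  exact ⟨ha, le_mul_two_rpow_neg_of_mul_two_pow_le hau hu⟩

/-- Bound on the number of `a ∈ A_N` with `|B_N(a)| = l`:
`|A_N^{(l)}| ≤ N * 2^{-(l^{1/m} - 1)}`. -/
theorem stmt7 (m : ℕ) (hm : 0 < m) (r : Fin m → ℕ) (hrprime : ∀ i, (r i).Prime)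
    (hrinj : Function.Injective r) (N l : ℕ) (hl : 1 ≤ l) :
    ((({a : ℕ | 1 ≤ a ∧ a ≤ N ∧ (∀ i, Nat.Coprime a (r i)) ∧
        ({b : ℕ | b ≤ N ∧ ∃ d : Fin m → ℕ, b = a * ∏ i, r i ^ d i} : Set ℕ).ncard = l} :
          Set ℕ).ncard : ℝ))
      ≤ (N : ℝ) * (2 : ℝ) ^ (-(((l : ℝ) ^ ((1 : ℝ) / m)) - 1)) :=
  stmt7_general m hm r hrprime N l hl
end

section
/- With ρ_min(l) = inf{ρ ≥ 0 : |D(ρ)| = l} and ρ_max(l) = sup{ρ ≥ 0 : |D(ρ)| = l}, for every integer l ≥ 1 both quantities are well defined (the set {ρ : |D(ρ)| = l} is a nonempty interval), ρ_min(l) < ρ_max(l), and ρ_min(l) ≥ (l^{1/m} − 1)·ln 2. -/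
/-!
The weight `n ↦ ∑ nᵢ ln rᵢ` is the logarithm of `∏ rᵢ ^ nᵢ`, so by unique factorisation it is
injective, and each coordinate of a point of `D(ρ)` is at most `ρ / ln 2`. Hence the weights form a
discrete set `0 = s₀ < s₁ < s₂ < ⋯`, the count `|D(ρ)|` increases by exactly one at each `sₖ`, and
`|D(ρ)| = l` holds exactly on `[s_{l-1}, s_l)`. The bound `|D(ρ)| ≤ (1 + ρ / ln 2) ^ m` evaluated at
`ρ = s_{l-1}` gives the lower bound on `ρ_min(l)`.
-/

open Set

section CountingFunction

variable {α : Type*} [LinearOrder α] {S : Set α} {x y b : α}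

theorem exists_isLeast_of_finite_inter_Iic (hfin : ∀ x, (S ∩ Iic x).Finite) (hS : S.Nonempty) :
    ∃ a, IsLeast S a := by
  obtain ⟨s, hs⟩ := hS
  obtain ⟨a, ⟨haS, has⟩, hmin⟩ := exists_min_image (S ∩ Iic s) id (hfin s) ⟨s, hs, le_rfl⟩
  refine ⟨a, haS, fun t ht => ?_⟩
  rcases le_total t s with hts | hst
  · exact hmin t ⟨ht, hts⟩
  · exact has.trans hst

theorem exists_isLeast_inter_Ioi (hfin : ∀ x, (S ∩ Iic x).Finite) (hinf : S.Infinite) (x : α) :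
    ∃ b, IsLeast (S ∩ Ioi x) b := by
  refine exists_isLeast_of_finite_inter_Iic
    (fun y => (hfin y).subset (inter_subset_inter_left _ inter_subset_left)) ?_
  obtain ⟨s, hs, hsx⟩ := not_subset.1 fun h : S ⊆ Iic x => hinf ((hfin x).subset (subset_inter
    subset_rfl h))
  exact ⟨s, hs, lt_of_not_ge hsx⟩

theorem inter_Iic_eq_of_isLeast_inter_Ioi (hb : IsLeast (S ∩ Ioi x) b) (hy : y ∈ Ico x b) :
    S ∩ Iic y = S ∩ Iic x := by
  refine Subset.antisymm (fun s ⟨hs, hsy⟩ => ⟨hs, not_lt.1 fun hxs => ?_⟩)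
    (inter_subset_inter_right _ (Iic_subset_Iic.2 hy.1))
  exact lt_irrefl b (((hb.2 ⟨hs, hxs⟩).trans hsy).trans_lt hy.2)

theorem inter_Iic_eq_insert_of_isLeast_inter_Ioi (hb : IsLeast (S ∩ Ioi x) b) :
    S ∩ Iic b = insert b (S ∩ Iic x) := by
  ext s
  constructor
  · rintro ⟨hs, hsb⟩
    rcases le_or_gt s x with hsx | hxs
    · exact Or.inr ⟨hs, hsx⟩
    · exact Or.inl (le_antisymm hsb (hb.2 ⟨hs, hxs⟩))
  · rintro (rfl | ⟨hs, hsx⟩)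
    · exact ⟨hb.1.1, le_rfl⟩
    · exact ⟨hs, hsx.trans hb.1.2.le⟩

theorem ncard_inter_Iic_of_isLeast_inter_Ioi (hfin : ∀ x, (S ∩ Iic x).Finite)
    (hb : IsLeast (S ∩ Ioi x) b) : (S ∩ Iic b).ncard = (S ∩ Iic x).ncard + 1 := by
  rw [inter_Iic_eq_insert_of_isLeast_inter_Ioi hb,
    ncard_insert_of_notMem (fun h => hb.1.2.not_ge h.2) (hfin x)]

theorem exists_ncard_inter_Iic_eq_add (hfin : ∀ x, (S ∩ Iic x).Finite) (hinf : S.Infinite)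
    {x₀ : α} (hx₀ : x₀ ∈ S) (k : ℕ) :
    ∃ a ∈ S, ∃ b, x₀ ≤ a ∧ IsLeast (S ∩ Ioi a) b ∧
      (S ∩ Iic a).ncard = (S ∩ Iic x₀).ncard + k := by
  induction k with
  | zero =>
    obtain ⟨b, hb⟩ := exists_isLeast_inter_Ioi hfin hinf x₀
    exact ⟨x₀, hx₀, b, le_rfl, hb, rfl⟩
  | succ k ih =>
    obtain ⟨a, -, b, hx₀a, hb, hcount⟩ := ih
    obtain ⟨c, hc⟩ := exists_isLeast_inter_Ioi hfin hinf b
    refine ⟨b, hb.1.1, c, hx₀a.trans hb.1.2.le, hc, ?_⟩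
    rw [ncard_inter_Iic_of_isLeast_inter_Ioi hfin hb, hcount, add_assoc]

theorem exists_setOf_ncard_inter_Iic_eq_Ico (hfin : ∀ x, (S ∩ Iic x).Finite)
    (hinf : S.Infinite) {x₀ : α} (hx₀ : x₀ ∈ S) (k : ℕ) :
    ∃ a b, x₀ ≤ a ∧ a < b ∧
      {y | x₀ ≤ y ∧ (S ∩ Iic y).ncard = (S ∩ Iic x₀).ncard + k} = Ico a b := by
  obtain ⟨a, haS, b, hx₀a, hb, hcount⟩ := exists_ncard_inter_Iic_eq_add hfin hinf hx₀ k
  refine ⟨a, b, hx₀a, hb.1.2, ?_⟩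
  rw [← hcount]
  ext y
  refine ⟨fun ⟨_, hy⟩ => ⟨not_lt.1 fun hya => ?_, not_le.1 fun hby => ?_⟩,
    fun hy => ⟨hx₀a.trans hy.1, by rw [inter_Iic_eq_of_isLeast_inter_Ioi hb hy]⟩⟩
  · have hlt : S ∩ Iic y ⊂ S ∩ Iic a :=
      ssubset_of_subset_not_subset (inter_subset_inter_right _ (Iic_subset_Iic.2 hya.le))
        fun h => hya.not_ge (h ⟨haS, le_rfl⟩).2
    exact (ncard_lt_ncard hlt (hfin a)).ne hy
  · have hle := ncard_le_ncard (inter_subset_inter_right S (Iic_subset_Iic.2 hby)) (hfin y)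
    rw [ncard_inter_Iic_of_isLeast_inter_Ioi hfin hb] at hle
    omega

end CountingFunction

section LogWeight

variable {ι : Type*} [Fintype ι] {r : ι → ℕ}

variable (r) in
noncomputable def logWeight (n : ι → ℕ) : ℝ :=
  ∑ i, (n i : ℝ) * Real.log (r i)

theorem logWeight_eq_log_prod (hr : ∀ i, r i ≠ 0) (n : ι → ℕ) :
    logWeight r n = Real.log (∏ i, r i ^ n i : ℕ) := by
  push_cast
  rw [Real.log_prod fun i _ => pow_ne_zero _ (Nat.cast_ne_zero.2 (hr i))]
  simp only [logWeight, Real.log_pow]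

theorem factorization_prod_pow_apply (hr : ∀ i, (r i).Prime) (hinj : Function.Injective r)
    (n : ι → ℕ) (j : ι) : (∏ i, r i ^ n i).factorization (r j) = n j := by
  rw [Nat.factorization_prod fun i _ => pow_ne_zero _ (hr i).ne_zero, Finsupp.finsetSum_apply,
    Finset.sum_eq_single j]
  · simp [(hr j).factorization_pow]
  · intro i _ hij
    rw [(hr i).factorization_pow, Finsupp.single_apply, if_neg fun h => hij (hinj h)]
  · simp

theorem logWeight_injective (hr : ∀ i, (r i).Prime) (hinj : Function.Injective r) :
    Function.Injective (logWeight r) := by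
  intro n n' h
  rw [logWeight_eq_log_prod (fun i => (hr i).ne_zero),
    logWeight_eq_log_prod (fun i => (hr i).ne_zero)] at h
  have hpos : ∀ n : ι → ℕ, (0 : ℝ) < (∏ i, r i ^ n i : ℕ) := fun n =>
    Nat.cast_pos.2 (Finset.prod_pos fun i _ => pow_pos (hr i).pos _)
  have hprod : ∏ i, r i ^ n i = ∏ i, r i ^ n' i :=
    Nat.cast_injective (Real.log_injOn_pos (hpos n) (hpos n') h)
  funext j
  rw [← factorization_prod_pow_apply hr hinj n j, hprod, factorization_prod_pow_apply hr hinj]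

theorem mul_log_two_le_logWeight (hr : ∀ i, 2 ≤ r i) (n : ι → ℕ) (j : ι) :
    n j * Real.log 2 ≤ logWeight r n := by
  have hlog : ∀ i, Real.log 2 ≤ Real.log (r i) := fun i =>
    Real.log_le_log two_pos (by exact_mod_cast hr i)
  calc n j * Real.log 2 ≤ n j * Real.log (r j) := 
        mul_le_mul_of_nonneg_left (hlog j) (Nat.cast_nonneg _)
    _ ≤ logWeight r n :=
      Finset.single_le_sum (f := fun i => (n i : ℝ) * Real.log (r i))
        (fun i _ => mul_nonneg (Nat.cast_nonneg _) ((Real.log_pos one_lt_two).le.trans (hlog i)))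
        (Finset.mem_univ j)

theorem preimage_Iic_logWeight_subset_pi (hr : ∀ i, 2 ≤ r i) (ρ : ℝ) :
    logWeight r ⁻¹' Iic ρ ⊆ univ.pi fun _ => Iic ⌊ρ / Real.log 2⌋₊ := fun n hn j _ =>
  Nat.le_floor ((le_div_iff₀ (Real.log_pos one_lt_two)).2
    ((mul_log_two_le_logWeight hr n j).trans hn))

theorem finite_preimage_Iic_logWeight (hr : ∀ i, 2 ≤ r i) (ρ : ℝ) :
    (logWeight r ⁻¹' Iic ρ).Finite :=
  (Finite.pi fun _ => finite_Iic _).subset (preimage_Iic_logWeight_subset_pi hr ρ)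

theorem ncard_preimage_Iic_logWeight_le (hr : ∀ i, 2 ≤ r i) {ρ : ℝ} (hρ : 0 ≤ ρ) :
    ((logWeight r ⁻¹' Iic ρ).ncard : ℝ) ≤ (1 + ρ / Real.log 2) ^ Fintype.card ι := by
  classical
  set B := ⌊ρ / Real.log 2⌋₊
  have hbox : (univ.pi fun _ : ι => Iic B) = ↑(Fintype.piFinset fun _ : ι => Finset.Iic B) := by
    simp
  have hcard : (logWeight r ⁻¹' Iic ρ).ncard ≤ (B + 1) ^ Fintype.card ι := by
    have := ncard_le_ncard (preimage_Iic_logWeight_subset_pi hr ρ) (hbox ▸ Finset.finite_toSet _)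
    rw [hbox, ncard_coe_finset, Fintype.card_piFinset] at this
    simpa using this
  calc ((logWeight r ⁻¹' Iic ρ).ncard : ℝ) ≤ ((B : ℝ) + 1) ^ Fintype.card ι := by
        exact_mod_cast hcard
    _ ≤ (1 + ρ / Real.log 2) ^ Fintype.card ι := by
        have := Nat.floor_le (div_nonneg hρ (Real.log_pos one_lt_two).le)
        gcongr ?_ ^ _
        linarith

theorem rpow_ncard_preimage_Iic_logWeight_sub_one_mul_le [Nonempty ι] (hr : ∀ i, 2 ≤ r i)
    {ρ : ℝ} (hρ : 0 ≤ ρ) :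
    (((logWeight r ⁻¹' Iic ρ).ncard : ℝ) ^ ((1 : ℝ) / Fintype.card ι) - 1) * Real.log 2 ≤ ρ := by
  have hlog := Real.log_pos one_lt_two
  have hroot : ((logWeight r ⁻¹' Iic ρ).ncard : ℝ) ^ ((1 : ℝ) / Fintype.card ι)
      ≤ 1 + ρ / Real.log 2 := by
    rw [← Real.pow_rpow_inv_natCast (by positivity : 0 ≤ 1 + ρ / Real.log 2)
      (Fintype.card_ne_zero (α := ι)), one_div]
    gcongr
    exact ncard_preimage_Iic_logWeight_le hr hρ
  calc _ ≤ ρ / Real.log 2 * Real.log 2 := by gcongr; linarith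
    _ = ρ := div_mul_cancel₀ ρ hlog.ne'

theorem preimage_Iic_zero_logWeight (hr : ∀ i, 2 ≤ r i) : logWeight r ⁻¹' Iic 0 = {0} := by
  refine Subset.antisymm (fun n hn => ?_) (by simp [logWeight])
  funext j
  have := (mul_log_two_le_logWeight hr n j).trans hn
  have : (n j : ℝ) ≤ 0 := nonpos_of_mul_nonpos_left this (Real.log_pos one_lt_two)
  exact_mod_cast this.antisymm (Nat.cast_nonneg _)

theorem exists_setOf_ncard_preimage_Iic_logWeight_eq_Ico [Nonempty ι] (hr : ∀ i, (r i).Prime)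
    (hinj : Function.Injective r) (k : ℕ) :
    ∃ a b, 0 ≤ a ∧ a < b ∧ {ρ | 0 ≤ ρ ∧ (logWeight r ⁻¹' Iic ρ).ncard = k + 1} = Ico a b := by
  have hr2 : ∀ i, 2 ≤ r i := fun i => (hr i).two_le
  have hwinj := logWeight_injective hr hinj
  have hcount : ∀ ρ, (logWeight r ⁻¹' Iic ρ).ncard = (range (logWeight r) ∩ Iic ρ).ncard :=
    fun ρ => by rw [← image_preimage_eq_range_inter, ncard_image_of_injective _ hwinj]
  have hfin : ∀ ρ, (range (logWeight r) ∩ Iic ρ).Finite := fun ρ => by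
    rw [← image_preimage_eq_range_inter]
    exact (finite_preimage_Iic_logWeight hr2 ρ).image _
  have h0 : (range (logWeight r) ∩ Iic 0).ncard = 1 := by
    rw [← hcount, preimage_Iic_zero_logWeight hr2, ncard_singleton]
  obtain ⟨a, b, ha, hab, hset⟩ := exists_setOf_ncard_inter_Iic_eq_Ico hfin
    (infinite_range_of_injective hwinj) (x₀ := 0) ⟨0, by simp [logWeight]⟩ k
  refine ⟨a, b, ha, hab, ?_⟩
  simp only [← hset, hcount, h0, add_comm]

end LogWeight

/-- With `|D(ρ)|` the number of tuples `n ∈ ℤ_{≥0}^m` with `∑ n_i ln r_i ≤ ρ`,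
for every integer `l ≥ 1` the set `{ρ ≥ 0 : |D(ρ)| = l}` is nonempty,
`ρ_min(l) = inf < sup = ρ_max(l)`, and `ρ_min(l) ≥ (l^{1/m} - 1) ln 2`. -/
theorem stmt19 (m : ℕ) (hm : 0 < m) (r : Fin m → ℕ) (hrprime : ∀ i, (r i).Prime)
    (hrinj : Function.Injective r) (l : ℕ) (hl : 1 ≤ l) :
    ({ρ : ℝ | 0 ≤ ρ ∧
        ({n : Fin m → ℕ | ∑ i, (n i : ℝ) * Real.log (r i) ≤ ρ} : Set (Fin m → ℕ)).ncard = l}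
        : Set ℝ).Nonempty ∧
    sInf {ρ : ℝ | 0 ≤ ρ ∧
        ({n : Fin m → ℕ | ∑ i, (n i : ℝ) * Real.log (r i) ≤ ρ} : Set (Fin m → ℕ)).ncard = l}
      < sSup {ρ : ℝ | 0 ≤ ρ ∧
        ({n : Fin m → ℕ | ∑ i, (n i : ℝ) * Real.log (r i) ≤ ρ} : Set (Fin m → ℕ)).ncard = l} ∧
    ((l : ℝ) ^ ((1 : ℝ) / m) - 1) * Real.log 2
      ≤ sInf {ρ : ℝ | 0 ≤ ρ ∧
        ({n : Fin m → ℕ | ∑ i, (n i : ℝ) * Real.log (r i) ≤ ρ} : Set (Fin m → ℕ)).ncard = l} := by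
  obtain ⟨k, rfl⟩ : ∃ k, l = k + 1 := ⟨l - 1, by omega⟩
  have : Nonempty (Fin m) := ⟨⟨0, hm⟩⟩
  obtain ⟨a, b, ha, hab, hlevel⟩ :=
    exists_setOf_ncard_preimage_Iic_logWeight_eq_Ico hrprime hrinj k
  have hcount_a : (logWeight r ⁻¹' Iic a).ncard = k + 1 := (hlevel ▸ left_mem_Ico.2 hab).2
  have hT : {ρ : ℝ | 0 ≤ ρ ∧
      ({n : Fin m → ℕ | ∑ i, (n i : ℝ) * Real.log (r i) ≤ ρ} : Set (Fin m → ℕ)).ncard = k + 1}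
      = Ico a b := hlevel
  rw [hT, csInf_Ico hab, csSup_Ico hab]
  refine ⟨nonempty_Ico.2 hab, hab, ?_⟩
  simpa [hcount_a] using
    rpow_ncard_preimage_Iic_logWeight_sub_one_mul_le (fun i => (hrprime i).two_le) ha
end
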